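/- arXiv:2605.24627 — 3 statements merged into one kernel-verified Lean document; each statement's English description precedes it below -/
import Mathlib

section
/- (Local expansion) As (δ,δ',ψ,w,w') → 0 within the domain δ,δ' ∈ [0,1], w² ≤ δ, (w')² ≤ δ', the distance deficit satisfies 2 − ‖x(θ,δ,w) − x(θ+π+ψ,δ',w')‖ = (δ+δ')/2 + ψ²/4 − (a²/4)(w−w')² + r, where the remainder r = o(δ + δ' + ψ² + w² + (w')²) uniformly in θ ∈ [0,2π]. -/
open Real

noncomputable def pt (a θ δ w : ℝ) : EuclideanSpace ℝ (Fin 3) :=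
  (WithLp.equiv 2 (Fin 3 → ℝ)).symm
    ![Real.sqrt (1-δ) * Real.cos θ, Real.sqrt (1-δ) * Real.sin θ, a*w]

/-!
The squared distance is `4 - D + E` with `D = 2(δ + δ') + ψ² - a²(w - w')²` and
`E = 2√(1-δ)√(1-δ') cos ψ - 2 + (δ + δ') + ψ²`. Writing `t = δ + δ' + ψ²`, the constraints
`w² ≤ δ`, `w'² ≤ δ'` give `|D| = O(t)`, while the AM–GM deficit of `√(1-δ)√(1-δ')` and the
quartic Taylor bound for `cos` give `|E| ≤ t²`. Hence `2 - √(4 - D + E) = D/4 + O(t²)`, with a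
constant depending only on `a` and not on `θ`.
-/

lemma norm_pt_sub_pt_sq (a θ δ δ' ψ w w' : ℝ) (hδ : δ ≤ 1) (hδ' : δ' ≤ 1) :
    ‖pt a θ δ w - pt a (θ + π + ψ) δ' w'‖ ^ 2 =
      2 - δ - δ' + 2 * (√(1 - δ) * √(1 - δ')) * cos ψ + a ^ 2 * (w - w') ^ 2 := by
  have hc : cos (θ + π + ψ) = -(cos θ * cos ψ - sin θ * sin ψ) := by
    rw [add_right_comm, cos_add_pi, cos_add]
  have hs : sin (θ + π + ψ) = -(sin θ * cos ψ + cos θ * sin ψ) := by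
    rw [add_right_comm, sin_add_pi, sin_add]
  rw [EuclideanSpace.real_norm_sq_eq, Fin.sum_univ_three]
  simp only [pt, PiLp.sub_apply, WithLp.equiv_symm_apply, Matrix.cons_val_zero, Matrix.cons_val_one,
    Matrix.cons_val_two, Matrix.head_cons, Matrix.tail_cons, hc, hs]
  linear_combination (√(1 - δ) ^ 2 + √(1 - δ') ^ 2 * (sin ψ ^ 2 + cos ψ ^ 2)
      + 2 * √(1 - δ) * √(1 - δ') * cos ψ) * sin_sq_add_cos_sq θ
    + √(1 - δ') ^ 2 * sin_sq_add_cos_sq ψ + sq_sqrt (sub_nonneg.2 hδ) + sq_sqrt (sub_nonneg.2 hδ')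

lemma abs_two_sub_sub_div_four_le {R D E : ℝ} (hR : 0 ≤ R) (h : R ^ 2 = 4 - D + E) :
    |2 - R - D / 4| ≤ (|D| * (|D| + |E|) + 8 * |E|) / 16 := by
  have h2R : |2 - R| * (2 + R) = |D - E| := by
    rw [← abs_of_pos (by linarith : (0 : ℝ) < 2 + R), ← abs_mul]
    congr 1; linear_combination -h
  have key : |2 - R - D / 4| * (4 * (2 + R)) = |D * (2 - R) - 4 * E| := by
    rw [← abs_of_pos (by linarith : (0 : ℝ) < 4 * (2 + R)), ← abs_mul]
    congr 1; linear_combination -4 * h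
  have hDE : |D * (2 - R) - 4 * E| ≤ |D| * |2 - R| + 4 * |E| := by
    simpa [abs_mul] using abs_sub (D * (2 - R)) (4 * E)
  have h2R' : |2 - R| ≤ (|D| + |E|) / 2 := by
    nlinarith [abs_nonneg (2 - R), abs_sub D E]
  have hD := mul_le_mul_of_nonneg_left h2R' (abs_nonneg D)
  nlinarith [abs_nonneg (2 - R - D / 4)]

lemma one_sub_add_div_two_sub_sqrt_mul_sqrt_mem_Icc {δ δ' : ℝ} (hδ : 0 ≤ δ) (hδ' : 0 ≤ δ')
    (h : δ + δ' ≤ 1) :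
    1 - (δ + δ') / 2 - √(1 - δ) * √(1 - δ') ∈ Set.Icc 0 ((δ - δ') ^ 2 / 2) := by
  set P := √(1 - δ) * √(1 - δ')
  have hP : 0 ≤ P := by positivity
  have hP2 : P ^ 2 = (1 - δ) * (1 - δ') := by
    rw [mul_pow, sq_sqrt (by linarith), sq_sqrt (by linarith)]
  -- `(1 - (δ + δ') / 2) ^ 2 - P ^ 2 = (δ - δ') ^ 2 / 4`
  constructor
  · nlinarith [sq_nonneg (δ - δ')]
  · nlinarith [sq_nonneg (δ - δ')]

lemma abs_two_mul_sqrt_mul_sqrt_mul_cos_sub_le {δ δ' ψ : ℝ} (hδ : 0 ≤ δ) (hδ' : 0 ≤ δ')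
    (h : δ + δ' + ψ ^ 2 ≤ 1) :
    |2 * (√(1 - δ) * √(1 - δ')) * cos ψ - 2 + (δ + δ') + ψ ^ 2| ≤ (δ + δ' + ψ ^ 2) ^ 2 := by
  set P := √(1 - δ) * √(1 - δ')
  have hψ2 := sq_nonneg ψ
  have hP0 : 0 ≤ P := by positivity
  obtain ⟨hAM, hAM'⟩ := one_sub_add_div_two_sub_sqrt_mul_sqrt_mem_Icc hδ hδ' (by linarith)
  have hcos : |cos ψ - (1 - ψ ^ 2 / 2)| ≤ ψ ^ 4 * (5 / 96) := by
    simpa [Even.pow_abs (by decide : Even 4)] using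
      cos_bound (abs_le_one_iff_mul_self_le_one.2 (by nlinarith))
  rw [abs_le] at hcos ⊢
  -- the expression is `2P (cos ψ - 1 + ψ²/2) - 2 (1 - (δ + δ')/2 - P) + ψ² (1 - P)`
  constructor <;> nlinarith [mul_le_mul_of_nonneg_left hcos.1 hP0,
    mul_le_mul_of_nonneg_left hcos.2 hP0, mul_nonneg hψ2 hAM, mul_nonneg hψ2 (add_nonneg hδ hδ'),
    mul_nonneg hδ hδ']

lemma abs_two_sub_norm_pt_sub_pt_sub_le (a θ δ δ' ψ w w' : ℝ) (hδ : 0 ≤ δ) (hδ' : 0 ≤ δ')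
    (hw : w ^ 2 ≤ δ) (hw' : w' ^ 2 ≤ δ') (h : δ + δ' + ψ ^ 2 ≤ 1) :
    |(2 - ‖pt a θ δ w - pt a (θ + π + ψ) δ' w'‖) -
        ((δ + δ') / 2 + ψ ^ 2 / 4 - a ^ 2 / 4 * (w - w') ^ 2)| ≤
      (a ^ 2 + 3) ^ 2 * (δ + δ' + ψ ^ 2) ^ 2 := by
  have hδ1 : δ ≤ 1 := by nlinarith [sq_nonneg ψ]
  have hδ'1 : δ' ≤ 1 := by nlinarith [sq_nonneg ψ]
  set t := δ + δ' + ψ ^ 2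
  set D := 2 * (δ + δ') + ψ ^ 2 - a ^ 2 * (w - w') ^ 2
  set E := 2 * (√(1 - δ) * √(1 - δ')) * cos ψ - 2 + (δ + δ') + ψ ^ 2
  have ht : 0 ≤ t := by positivity
  have hR : ‖pt a θ δ w - pt a (θ + π + ψ) δ' w'‖ ^ 2 = 4 - D + E := by
    rw [norm_pt_sub_pt_sq a θ δ δ' ψ w w' hδ1 hδ'1]; ring
  have hE : |E| ≤ t ^ 2 := abs_two_mul_sqrt_mul_sqrt_mul_cos_sub_le hδ hδ' h
  have hD : |D| ≤ 2 * (1 + a ^ 2) * t := by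
    have : (w - w') ^ 2 ≤ 2 * (δ + δ') := by nlinarith [sq_nonneg (w + w')]
    rw [abs_le]; constructor <;> nlinarith [sq_nonneg a, sq_nonneg (w - w'), sq_nonneg ψ]
  calc _ = |2 - ‖pt a θ δ w - pt a (θ + π + ψ) δ' w'‖ - D / 4| := by
        congr 1; simp only [D]; ring
    _ ≤ (|D| * (|D| + |E|) + 8 * |E|) / 16 := abs_two_sub_sub_div_four_le (norm_nonneg _) hR
    _ ≤ (2 * (1 + a ^ 2) * t * (2 * (1 + a ^ 2) * t + t) + 8 * t ^ 2) / 16 := by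
        gcongr; nlinarith
    _ ≤ (a ^ 2 + 3) ^ 2 * t ^ 2 := by nlinarith [sq_nonneg a, sq_nonneg t]

theorem stmt6_general (a : ℝ) :
    ∀ ε > (0:ℝ), ∃ η > (0:ℝ), ∀ θ ∈ Set.Icc (0:ℝ) (2*π), ∀ δ δ' ψ w w' : ℝ,
      δ ∈ Set.Icc (0:ℝ) 1 → δ' ∈ Set.Icc (0:ℝ) 1 → w ^ 2 ≤ δ → w' ^ 2 ≤ δ' →
      δ + δ' + ψ ^ 2 + w ^ 2 + w' ^ 2 < η →
      |(2 - ‖pt a θ δ w - pt a (θ + π + ψ) δ' w'‖) -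
          ((δ + δ') / 2 + ψ ^ 2 / 4 - a ^ 2 / 4 * (w - w') ^ 2)| ≤
        ε * (δ + δ' + ψ ^ 2 + w ^ 2 + w' ^ 2) := by
  intro ε hε
  set C := (a ^ 2 + 3) ^ 2
  have hC : 0 < C := by positivity
  refine ⟨min 1 (ε / C), by positivity, fun θ _ δ δ' ψ w w' hδ hδ' hw hw' hs ↦ ?_⟩
  set s := δ + δ' + ψ ^ 2 + w ^ 2 + w' ^ 2
  have ht : δ + δ' + ψ ^ 2 ≤ s := by nlinarith [sq_nonneg w, sq_nonneg w']
  have ht0 : 0 ≤ δ + δ' + ψ ^ 2 := by nlinarith [hδ.1, hδ'.1, sq_nonneg ψ]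
  have hs1 : s ≤ 1 := (hs.trans_le (min_le_left _ _)).le
  have hsε : C * s ≤ ε := by
    have := hs.trans_le (min_le_right _ _)
    rw [lt_div_iff₀ hC] at this; linarith
  calc _ ≤ C * (δ + δ' + ψ ^ 2) ^ 2 :=
        abs_two_sub_norm_pt_sub_pt_sub_le a θ δ δ' ψ w w' hδ.1 hδ'.1 hw hw' (ht.trans hs1)
    _ ≤ C * s * s := by rw [mul_assoc, ← sq]; gcongr
    _ ≤ ε * s := by gcongr

/-- Local expansion: `2 - ‖x(θ,δ,w) - x(θ+π+ψ,δ',w')‖` equals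
`(δ+δ')/2 + ψ²/4 - (a²/4)(w-w')²` up to a remainder which is
`o(δ+δ'+ψ²+w²+w'²)`, uniformly in `θ ∈ [0,2π]`. -/
theorem stmt6 (a : ℝ) (ha : 0 < a) (ha1 : a < 1) :
    ∀ ε > (0:ℝ), ∃ η > (0:ℝ), ∀ θ ∈ Set.Icc (0:ℝ) (2*π), ∀ δ δ' ψ w w' : ℝ,
      δ ∈ Set.Icc (0:ℝ) 1 → δ' ∈ Set.Icc (0:ℝ) 1 → w ^ 2 ≤ δ → w' ^ 2 ≤ δ' →
      δ + δ' + ψ ^ 2 + w ^ 2 + w' ^ 2 < η →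
      |(2 - ‖pt a θ δ w - pt a (θ + π + ψ) δ' w'‖) -
          ((δ + δ') / 2 + ψ ^ 2 / 4 - a ^ 2 / 4 * (w - w') ^ 2)| ≤
        ε * (δ + δ' + ψ ^ 2 + w ^ 2 + w' ^ 2) :=
  stmt6_general a
end

section
/- There exists a constant γ > 0, depending only on a ∈ (0,1), such that for all δ, δ' ∈ [0,1] sufficiently small and all w, w' with w² ≤ δ, (w')² ≤ δ', and all angles θ, θ', the points x = x(θ,δ,w) and y = x(θ',δ',w') satisfy ‖x−y‖² ≤ 4 − γ(δ+δ'). -/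
open Real

/-!
By the triangle inequality `‖x - y‖² ≤ 2 (‖x‖² + ‖y‖²)`, and
`‖x(θ, δ, w)‖² = 1 - δ + a² w² ≤ 1 - (1 - a²) δ` when `w² ≤ δ ≤ 1`; so `γ = 2 (1 - a²)` and
`δ₀ = 1` work.
-/

lemma norm_sub_sq_le_two_mul_add {E : Type*} [SeminormedAddGroup E] (x y : E) :
    ‖x - y‖ ^ 2 ≤ 2 * (‖x‖ ^ 2 + ‖y‖ ^ 2) :=
  (pow_le_pow_left₀ (norm_nonneg _) (norm_sub_le x y) 2).trans add_sq_le

lemma norm_sq_pt {δ : ℝ} (hδ : δ ≤ 1) (a θ w : ℝ) :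
    ‖pt a θ δ w‖ ^ 2 = (1 - δ) + (a * w) ^ 2 := by
  rw [EuclideanSpace.norm_sq_eq]
  simp only [pt, Fin.sum_univ_three, Real.norm_eq_abs, sq_abs]
  simp only [WithLp.equiv_symm_apply, Matrix.cons_val_zero, Matrix.cons_val_one,
    Matrix.cons_val_two, Matrix.head_cons, Matrix.tail_cons, mul_pow,
    Real.sq_sqrt (sub_nonneg.mpr hδ)]
  linear_combination (1 - δ) * Real.sin_sq_add_cos_sq θ

lemma norm_sq_pt_le {a δ w : ℝ} (hδ : δ ≤ 1) (hw : w ^ 2 ≤ δ) (θ : ℝ) :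
    ‖pt a θ δ w‖ ^ 2 ≤ 1 - (1 - a ^ 2) * δ := by
  rw [norm_sq_pt hδ, mul_pow]
  nlinarith [mul_le_mul_of_nonneg_left hw (sq_nonneg a)]

theorem stmt7 (a : ℝ) (ha : 0 < a) (ha1 : a < 1) :
    ∃ γ > (0:ℝ), ∃ δ₀ > (0:ℝ), ∀ δ δ' : ℝ, δ ∈ Set.Icc (0:ℝ) δ₀ → δ' ∈ Set.Icc (0:ℝ) δ₀ →
      ∀ w w' : ℝ, w ^ 2 ≤ δ → w' ^ 2 ≤ δ' → ∀ θ θ' : ℝ,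
      ‖pt a θ δ w - pt a θ' δ' w'‖ ^ 2 ≤ 4 - γ * (δ + δ') := by
  refine ⟨2 * (1 - a ^ 2), by nlinarith, 1, one_pos, ?_⟩
  rintro δ δ' ⟨-, hδ⟩ ⟨-, hδ'⟩ w w' hw hw' θ θ'
  calc ‖pt a θ δ w - pt a θ' δ' w'‖ ^ 2
      ≤ 2 * (‖pt a θ δ w‖ ^ 2 + ‖pt a θ' δ' w'‖ ^ 2) := norm_sub_sq_le_two_mul_add _ _
    _ ≤ 2 * ((1 - (1 - a ^ 2) * δ) + (1 - (1 - a ^ 2) * δ')) := by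
      gcongr
      exacts [norm_sq_pt_le hδ hw θ, norm_sq_pt_le hδ' hw' θ']
    _ = 4 - 2 * (1 - a ^ 2) * (δ + δ') := by ring
end

section
/- (Overlap estimate) Let X₁, X₂, X₃ be independent uniform random points on the ellipsoid E = {(x₁,x₂,x₃) : x₁² + x₂² + x₃²/a² ≤ 1} with 0 < a < 1, and let W_{ij} = 2 − ‖X_i − X_j‖. Then there exist constants C' > 0 and ε₀ > 0 such that P(W₁₂ ≤ ε, W₁₃ ≤ ε) ≤ C'·ε^{11/2} for all 0 < ε < ε₀. -/
open Real MeasureTheory ProbabilityTheory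

def Ell (a : ℝ) : Set (EuclideanSpace ℝ (Fin 3)) :=
  {x | x 0 ^ 2 + x 1 ^ 2 + x 2 ^ 2 / a ^ 2 ≤ 1}

noncomputable def unifE (a : ℝ) : Measure (EuclideanSpace ℝ (Fin 3)) :=
  (volume (Ell a))⁻¹ • volume.restrict (Ell a)

/-!
Because the ellipsoid is flattened (`a < 1`), its points of norm at least `1 - ε` lie in the
band `x₃² ≤ κε, 1 - κε ≤ x₁² + x₂² ≤ 1` around the unit circle of the horizontal plane, where
`κ = 2 / (1 - a²)`; this band has volume `O(ε^{3/2})`. If `W₁₂ ≤ ε` and `W₁₃ ≤ ε`, then `X₁`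
lies in the band and, by the parallelogram law, `X₂` and `X₃` lie in the band within distance
`2√ε` of `-X₁`. That part of the band has volume `O(ε²)`: along a horizontal axis on which `-X₁`
has a coordinate of size at least `1/2`, the band has radial thickness `O(ε)`, while the other
two coordinates range over intervals of length `O(√ε)`. By independence and Fubini the
probability is at most `O(ε^{3/2}) · O(ε²)² = O(ε^{11/2})`.
-/

open Set Metric

lemma two_mul_abs_sub_le_abs_sq_sub {r v w : ℝ} (hvw : 0 ≤ v * w) (hv : r ≤ |v|) (hw : r ≤ |w|) :
    2 * r * |v - w| ≤ |v ^ 2 - w ^ 2| := by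
  rw [sq_sub_sq, abs_mul, (abs_add_eq_add_abs_iff v w).mpr (mul_nonneg_iff.mp hvw)]
  exact mul_le_mul_of_nonneg_right (by linarith) (abs_nonneg _)

theorem volume_setOf_sq_mem_Icc_le {c δ r : ℝ} (hr : 0 < r) :
    volume {v : ℝ | v ^ 2 ∈ Icc c (c + δ) ∧ r ≤ |v|} ≤ ENNReal.ofReal (δ / r) := by
  set S := {v : ℝ | v ^ 2 ∈ Icc c (c + δ) ∧ r ≤ |v|}
  -- On either half-line `v ↦ v ^ 2` stretches distances by at least `2 * r`.
  have half : ∀ s ⊆ S, (∀ v ∈ s, ∀ w ∈ s, 0 ≤ v * w) →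
      volume s ≤ ENNReal.ofReal (δ / (2 * r)) := by
    refine fun s hsS hs => (Real.volume_le_diam s).trans <| Metric.ediam_le fun v hv w hw => ?_
    obtain ⟨⟨hv₁, hv₂⟩, hvr⟩ := hsS hv
    obtain ⟨⟨hw₁, hw₂⟩, hwr⟩ := hsS hw
    rw [edist_dist, Real.dist_eq]
    refine ENNReal.ofReal_le_ofReal <| (le_div_iff₀' (by positivity)).mpr ?_
    exact (two_mul_abs_sub_le_abs_sq_sub (hs v hv w hw) hvr hwr).trans <| abs_sub_le_iff.mpr
      ⟨by linarith, by linarith⟩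
  calc volume S ≤ volume (S ∩ Ici 0 ∪ S ∩ Iic 0) := by
        refine measure_mono fun v hv => ?_
        rcases le_total 0 v with h | h
        exacts [Or.inl ⟨hv, h⟩, Or.inr ⟨hv, h⟩]
    _ ≤ ENNReal.ofReal (δ / (2 * r)) + ENNReal.ofReal (δ / (2 * r)) :=
        (measure_union_le _ _).trans <| add_le_add
          (half _ inter_subset_left fun v hv w hw => mul_nonneg hv.2 hw.2)
          (half _ inter_subset_left fun v hv w hw => mul_nonneg_of_nonpos_of_nonpos hv.2 hw.2)
    _ = ENNReal.ofReal (δ / r) := by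
        rw [← two_mul, ← ENNReal.ofReal_ofNat 2, ← ENNReal.ofReal_mul zero_le_two]
        congr 1
        field_simp

theorem volume_le_mul_of_fiber_le {n : ℕ} (j : Fin (n + 1)) {S : Set (Fin (n + 1) → ℝ)}
    (hS : MeasurableSet S) {R : Set (Fin n → ℝ)} (hSR : ∀ y ∈ S, j.removeNth y ∈ R)
    {ℓ : ENNReal} (hfiber : ∀ z, volume {t | j.insertNth t z ∈ S} ≤ ℓ) :
    volume S ≤ ℓ * volume R := by
  have he := (volume_preserving_piFinSuccAbove (fun _ : Fin (n + 1) => ℝ) j).symm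
  rw [← he.measure_preimage hS.nullMeasurableSet, Measure.volume_eq_prod,
    Measure.prod_apply_symm (he.measurable hS)]
  refine (lintegral_mono fun z => ?_).trans (lintegral_indicator_const_le R ℓ)
  by_cases hz : z ∈ R
  · rw [indicator_of_mem hz]
    exact hfiber z
  · rw [indicator_of_notMem hz, nonpos_iff_eq_zero, measure_eq_zero_iff_ae_notMem]
    refine Filter.Eventually.of_forall fun t ht => hz ?_
    simpa using hSR (j.insertNth t z) ht

/-- `hk` and `h2` say that deleting coordinate `j` leaves the coordinates `k`, `2` in this order,
i.e. `{j, k} = {0, 1}`. -/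
theorem volume_le_of_forall_mem_window {T : Set (EuclideanSpace ℝ (Fin 3))}
    (hT : MeasurableSet T) {j k : Fin 3} (hk : j.succAbove 0 = k) (h2 : j.succAbove 1 = 2)
    {h m W c δ r : ℝ} (hh : 0 ≤ h) (hW : 0 ≤ W) (hr : 0 < r)
    (hTsub : ∀ y ∈ T,
      |y 2| ≤ h ∧ |y k - m| ≤ W ∧ y j ^ 2 + y k ^ 2 ∈ Icc c (c + δ) ∧ r ≤ |y j|) :
    volume T ≤ ENNReal.ofReal (2 * W * (2 * h) * (δ / r)) := by
  have hbox : volume (Icc ![m - W, -h] ![m + W, h]) = ENNReal.ofReal (2 * W * (2 * h)) := by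
    rw [Real.volume_Icc_pi, Fin.prod_univ_two]
    simp only [Matrix.cons_val_zero, Matrix.cons_val_one]
    rw [← ENNReal.ofReal_mul (by linarith)]
    ring_nf
  rw [ENNReal.ofReal_mul (by positivity), mul_comm,
    ← (PiLp.volume_preserving_toLp (Fin 3)).measure_preimage hT.nullMeasurableSet, ← hbox]
  refine volume_le_mul_of_fiber_le j ((PiLp.volume_preserving_toLp _).measurable hT)
    (fun y hy => ?_) (fun z => ?_)
  · obtain ⟨hy2, hyk, -, -⟩ := hTsub _ hy
    obtain ⟨hy2, hy2'⟩ := abs_le.mp hy2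
    obtain ⟨hyk, hyk'⟩ := abs_le.mp hyk
    simp only [mem_Icc, Pi.le_def, Fin.forall_fin_two, Fin.removeNth_apply, hk, h2,
      Matrix.cons_val_zero, Matrix.cons_val_one]
    exact ⟨⟨by linarith, by linarith⟩, by linarith, by linarith⟩
  · refine (measure_mono fun t ht => ?_).trans
      (volume_setOf_sq_mem_Icc_le (c := c - z 0 ^ 2) hr)
    subst hk
    obtain ⟨-, -, ⟨hc, hcδ⟩, hrt⟩ := hTsub _ ht
    simp only [Fin.insertNth_apply_same, Fin.insertNth_apply_succAbove] at hc hcδ hrt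
    exact ⟨⟨by linarith, by linarith⟩, hrt⟩

lemma half_le_abs_or_half_le_abs {u v : ℝ} (h : 1 / 2 ≤ u ^ 2 + v ^ 2) :
    1 / 2 ≤ |u| ∨ 1 / 2 ≤ |v| := by
  by_contra! huv
  nlinarith [sq_abs u, sq_abs v, abs_nonneg u, abs_nonneg v]

def equatorBand (η : ℝ) : Set (EuclideanSpace ℝ (Fin 3)) :=
  {y | y 2 ^ 2 ≤ η ∧ y 0 ^ 2 + y 1 ^ 2 ∈ Icc (1 - η) 1}

lemma measurableSet_equatorBand (η : ℝ) : MeasurableSet (equatorBand η) := by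
  unfold equatorBand
  measurability

theorem volume_equatorBand_le {η : ℝ} (hη : η ≤ 1 / 2) :
    volume (equatorBand η) ≤ ENNReal.ofReal (16 * η * √η) := by
  have piece : ∀ j k : Fin 3, j.succAbove 0 = k → j.succAbove 1 = 2 →
      (∀ y : EuclideanSpace ℝ (Fin 3), y j ^ 2 + y k ^ 2 = y 0 ^ 2 + y 1 ^ 2) →
      volume (equatorBand η ∩ {y | 1 / 2 ≤ |y j|}) ≤ ENNReal.ofReal (8 * η * √η) := by
    intro j k hk h2 hsum
    refine (volume_le_of_forall_mem_window ((measurableSet_equatorBand η).inter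
      (measurableSet_le measurable_const (by fun_prop))) hk h2 (m := 0) (c := 1 - η) (δ := η)
      (sqrt_nonneg η) zero_le_one (by norm_num : (0 : ℝ) < 1 / 2)
      fun y ⟨⟨hy2, hy01⟩, hyj⟩ => ?_).trans_eq (by ring_nf)
    refine ⟨Real.abs_le_sqrt hy2, ?_, by rwa [hsum, sub_add_cancel], hyj⟩
    rw [sub_zero, ← sq_le_one_iff_abs_le_one]
    nlinarith [hsum y, hy01.2, sq_nonneg (y j)]
  calc volume (equatorBand η)
      ≤ volume (equatorBand η ∩ {y | 1 / 2 ≤ |y 0|} ∪ equatorBand η ∩ {y | 1 / 2 ≤ |y 1|}) := by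
        refine measure_mono fun y hy => ?_
        have := half_le_abs_or_half_le_abs (by linarith [hy.2.1] : 1 / 2 ≤ y 0 ^ 2 + y 1 ^ 2)
        exact this.imp (⟨hy, ·⟩) (⟨hy, ·⟩)
    _ ≤ ENNReal.ofReal (8 * η * √η) + ENNReal.ofReal (8 * η * √η) :=
        (measure_union_le _ _).trans <| add_le_add (piece 0 1 rfl rfl fun _ => rfl)
          (piece 1 0 rfl rfl fun _ => add_comm _ _)
    _ = ENNReal.ofReal (16 * η * √η) := by
        rw [← two_mul, ← ENNReal.ofReal_ofNat 2, ← ENNReal.ofReal_mul zero_le_two]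
        ring_nf

theorem volume_equatorBand_inter_closedBall_le {η ρ : ℝ} {z : EuclideanSpace ℝ (Fin 3)}
    (hz : 1 / 2 ≤ z 0 ^ 2 + z 1 ^ 2) (hρ₀ : 0 ≤ ρ) (hρ : ρ ≤ 1 / 4) :
    volume (equatorBand η ∩ closedBall z ρ) ≤ ENNReal.ofReal (16 * ρ * η * √η) := by
  have key : ∀ j k : Fin 3, j.succAbove 0 = k → j.succAbove 1 = 2 →
      (∀ y : EuclideanSpace ℝ (Fin 3), y j ^ 2 + y k ^ 2 = y 0 ^ 2 + y 1 ^ 2) → 1 / 2 ≤ |z j| →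
      volume (equatorBand η ∩ closedBall z ρ) ≤ ENNReal.ofReal (16 * ρ * η * √η) := by
    intro j k hk h2 hsum hzj
    refine (volume_le_of_forall_mem_window ((measurableSet_equatorBand η).inter
      measurableSet_closedBall) hk h2 (m := z k) (c := 1 - η) (δ := η)
      (sqrt_nonneg η) hρ₀ (by norm_num : (0 : ℝ) < 1 / 4)
      fun y ⟨⟨hy2, hy01⟩, hyz⟩ => ?_).trans_eq (by ring_nf)
    have hcoord : ∀ i, |y i - z i| ≤ ρ := fun i =>
      (PiLp.dist_apply_le y z i).trans (mem_closedBall.mp hyz)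
    refine ⟨Real.abs_le_sqrt hy2, hcoord k, by rwa [hsum, sub_add_cancel], ?_⟩
    linarith [hcoord j, abs_sub_abs_le_abs_sub (z j) (y j), abs_sub_comm (z j) (y j)]
  rcases half_le_abs_or_half_le_abs hz with h | h
  · exact key 0 1 rfl rfl (fun _ => rfl) h
  · exact key 1 0 rfl rfl (fun _ => add_comm _ _) h

lemma norm_add_le_of_two_sub_norm_sub_le {E : Type*} [NormedAddCommGroup E]
    [InnerProductSpace ℝ E] {x y : E} {ε : ℝ} (hx : ‖x‖ ≤ 1) (hy : ‖y‖ ≤ 1)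
    (h : 2 - ‖x - y‖ ≤ ε) : ‖x + y‖ ≤ 2 * √ε := by
  have hpar := parallelogram_law_with_norm ℝ x y
  have hsub : ‖x - y‖ ≤ 2 := (norm_sub_le x y).trans (by linarith)
  have hε : 0 ≤ ε := by linarith
  refine (pow_le_pow_iff_left₀ (norm_nonneg _) (by positivity) two_ne_zero).mp ?_
  rw [mul_pow, sq_sqrt hε]
  nlinarith [norm_nonneg (x - y), norm_nonneg x, norm_nonneg y]

lemma measurableSet_Ell (a : ℝ) : MeasurableSet (Ell a) := by
  unfold Ell
  measurability

lemma norm_sq_eq_fin_three (y : EuclideanSpace ℝ (Fin 3)) :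
    ‖y‖ ^ 2 = y 0 ^ 2 + y 1 ^ 2 + y 2 ^ 2 := by
  simp [EuclideanSpace.norm_sq_eq, Fin.sum_univ_three]

lemma norm_le_one_of_mem_Ell {a : ℝ} (ha : 0 < a) (ha1 : a ≤ 1)
    {y : EuclideanSpace ℝ (Fin 3)} (hy : y ∈ Ell a) : ‖y‖ ≤ 1 := by
  have h2 : y 2 ^ 2 ≤ y 2 ^ 2 / a ^ 2 :=
    le_div_self (sq_nonneg _) (by positivity) (pow_le_one₀ ha.le ha1)
  have hy' : y 0 ^ 2 + y 1 ^ 2 + y 2 ^ 2 / a ^ 2 ≤ 1 := hy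
  refine (sq_le_one_iff₀ (norm_nonneg y)).mp ?_
  rw [norm_sq_eq_fin_three]
  linarith

lemma closedBall_subset_Ell {a : ℝ} (ha : 0 < a) (ha1 : a ≤ 1) :
    closedBall (0 : EuclideanSpace ℝ (Fin 3)) a ⊆ Ell a := by
  intro y hy
  have hn : y 0 ^ 2 + y 1 ^ 2 + y 2 ^ 2 ≤ a ^ 2 := by
    rw [← norm_sq_eq_fin_three]
    exact pow_le_pow_left₀ (norm_nonneg y) (mem_closedBall_zero_iff.mp hy) 2
  have ha2 : a ^ 2 ≤ 1 := pow_le_one₀ ha.le ha1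
  calc y 0 ^ 2 + y 1 ^ 2 + y 2 ^ 2 / a ^ 2
      ≤ y 0 ^ 2 / a ^ 2 + y 1 ^ 2 / a ^ 2 + y 2 ^ 2 / a ^ 2 := by
        gcongr <;> exact le_div_self (sq_nonneg _) (by positivity) ha2
    _ = (y 0 ^ 2 + y 1 ^ 2 + y 2 ^ 2) / a ^ 2 := by ring
    _ ≤ 1 := (div_le_one (by positivity)).mpr hn

lemma volume_Ell_pos {a : ℝ} (ha : 0 < a) (ha1 : a ≤ 1) : 0 < volume (Ell a) :=
  (measure_closedBall_pos volume 0 ha).trans_le (measure_mono (closedBall_subset_Ell ha ha1))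

lemma volume_Ell_ne_top {a : ℝ} (ha : 0 < a) (ha1 : a ≤ 1) : volume (Ell a) ≠ ⊤ :=
  ((measure_mono fun _ hy => mem_closedBall_zero_iff.mpr
    (norm_le_one_of_mem_Ell ha ha1 hy)).trans_lt measure_closedBall_lt_top).ne

lemma unifE_apply (a : ℝ) (s : Set (EuclideanSpace ℝ (Fin 3))) :
    unifE a s = (volume (Ell a))⁻¹ * volume (s ∩ Ell a) := by
  rw [unifE, Measure.smul_apply, smul_eq_mul, Measure.restrict_apply' (measurableSet_Ell a)]

lemma unifE_apply_le_ofReal {a c : ℝ} (ha : 0 < a) (ha1 : a ≤ 1)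
    {s : Set (EuclideanSpace ℝ (Fin 3))} (hs : volume (s ∩ Ell a) ≤ ENNReal.ofReal c) :
    unifE a s ≤ ENNReal.ofReal ((volume (Ell a)).toReal⁻¹ * c) := by
  rw [unifE_apply, ENNReal.ofReal_mul (by positivity), ENNReal.ofReal_inv_of_pos
    (ENNReal.toReal_pos (volume_Ell_pos ha ha1).ne' (volume_Ell_ne_top ha ha1)),
    ENNReal.ofReal_toReal (volume_Ell_ne_top ha ha1)]
  gcongr

instance (a : ℝ) : SFinite (unifE a) := by
  unfold unifE
  infer_instance

lemma ae_mem_Ell (a : ℝ) : ∀ᵐ x ∂unifE a, x ∈ Ell a :=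
  Measure.ae_smul_measure (ae_restrict_mem (measurableSet_Ell a)) _

lemma mem_equatorBand_of_mem_Ell {a ε : ℝ} (ha : 0 < a) (ha1 : a < 1)
    {y : EuclideanSpace ℝ (Fin 3)} (hy : y ∈ Ell a) (hny : 1 - ε ≤ ‖y‖) :
    y ∈ equatorBand (2 / (1 - a ^ 2) * ε) := by
  have hy' : y 0 ^ 2 + y 1 ^ 2 + y 2 ^ 2 / a ^ 2 ≤ 1 := hy
  have hn1 := norm_le_one_of_mem_Ell ha ha1.le hy
  have hn : 1 - 2 * ε ≤ y 0 ^ 2 + y 1 ^ 2 + y 2 ^ 2 := by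
    rw [← norm_sq_eq_fin_three]
    nlinarith [norm_nonneg y]
  have ha2 : 0 < 1 - a ^ 2 := by nlinarith
  have hz : a ^ 2 * (y 0 ^ 2 + y 1 ^ 2) + y 2 ^ 2 ≤ a ^ 2 := by
    have := mul_le_mul_of_nonneg_left hy' (sq_nonneg a)
    rwa [mul_add, mul_div_cancel₀ _ (by positivity), mul_one] at this
  rw [div_mul_eq_mul_div]
  refine ⟨(le_div_iff₀ ha2).mpr (by nlinarith), ?_,
    by nlinarith [div_nonneg (sq_nonneg (y 2)) (sq_nonneg a)]⟩
  rw [sub_le_comm, le_div_iff₀ ha2]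
  nlinarith

theorem unifE_setOf_two_sub_norm_sub_le_le {a ε η : ℝ} (ha : 0 < a) (ha1 : a ≤ 1)
    (hband : ∀ y ∈ Ell a, 1 - ε ≤ ‖y‖ → y ∈ equatorBand η) (hη : η ≤ 1 / 2) (hε : ε ≤ 1 / 64)
    {x : EuclideanSpace ℝ (Fin 3)} (hx : x ∈ Ell a) :
    unifE a {y | 2 - ‖x - y‖ ≤ ε} ≤ (equatorBand η).indicator
      (fun _ => ENNReal.ofReal ((volume (Ell a)).toReal⁻¹ * (32 * √ε * η * √η))) x := by
  have hx1 := norm_le_one_of_mem_Ell ha ha1 hx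
  have hpair : ∀ y ∈ {y | 2 - ‖x - y‖ ≤ ε} ∩ Ell a,
      x ∈ equatorBand η ∧ y ∈ equatorBand η ∩ closedBall (-x) (2 * √ε) := by
    rintro y ⟨hxy : 2 - ‖x - y‖ ≤ ε, hy⟩
    have hy1 := norm_le_one_of_mem_Ell ha ha1 hy
    have := norm_sub_le x y
    refine ⟨hband x hx (by linarith), hband y hy (by linarith), ?_⟩
    rw [mem_closedBall, dist_eq_norm, sub_neg_eq_add, add_comm]
    exact norm_add_le_of_two_sub_norm_sub_le hx1 hy1 hxy
  by_cases hxη : x ∈ equatorBand η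
  · rw [indicator_of_mem hxη]
    refine unifE_apply_le_ofReal ha ha1 <| (measure_mono fun y hy => (hpair y hy).2).trans <|
      (volume_equatorBand_inter_closedBall_le ?_ (by positivity) ?_).trans_eq (by ring_nf)
    · simp only [PiLp.neg_apply, neg_sq]
      linarith [hxη.2.1]
    · have : √ε ≤ √((1 / 8) ^ 2) := Real.sqrt_le_sqrt (by linarith)
      rw [Real.sqrt_sq (by norm_num)] at this
      linarith
  · rw [indicator_of_notMem hxη, unifE_apply,
      measure_mono_null (fun y hy => hxη (hpair y hy).1) measure_empty, mul_zero]

theorem ProbabilityTheory.iIndepFun.map_fin_three_eq_prod {Ω E : Type*} [MeasurableSpace Ω]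
    [MeasurableSpace E] {P : Measure Ω} [IsFiniteMeasure P] {μ : Measure E}
    {X : Fin 3 → Ω → E} (hindep : iIndepFun X P) (hX : ∀ i, Measurable (X i))
    (hd : ∀ i, P.map (X i) = μ) :
    P.map (fun ω => (X 0 ω, X 1 ω, X 2 ω)) = μ.prod (μ.prod μ) := by
  have h12 : P.map (fun ω => (X 1 ω, X 2 ω)) = μ.prod μ := by
    rw [(indepFun_iff_map_prod_eq_prod_map_map (hX 1).aemeasurable (hX 2).aemeasurable).mp
      (hindep.indepFun (by decide)), hd 1, hd 2]
  rw [(indepFun_iff_map_prod_eq_prod_map_map (hX 0).aemeasurable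
    ((hX 1).prodMk (hX 2)).aemeasurable).mp
    (hindep.indepFun_prodMk hX 1 2 0 (by decide) (by decide)).symm, hd 0, h12]

theorem ProbabilityTheory.iIndepFun.measure_mem_and_mem_le {Ω E : Type*} [MeasurableSpace Ω]
    [MeasurableSpace E] {P : Measure Ω} [IsFiniteMeasure P] {μ : Measure E} [SFinite μ]
    {X : Fin 3 → Ω → E} (hindep : iIndepFun X P) (hX : ∀ i, Measurable (X i))
    (hd : ∀ i, P.map (X i) = μ) {G : E → Set E}
    (hG : MeasurableSet {p : E × E × E | p.2.1 ∈ G p.1 ∧ p.2.2 ∈ G p.1}) {s : Set E}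
    {M : ENNReal} (hM : ∀ᵐ x ∂μ, μ (G x) ≤ s.indicator (fun _ => M) x) :
    P {ω | X 1 ω ∈ G (X 0 ω) ∧ X 2 ω ∈ G (X 0 ω)} ≤ M ^ 2 * μ s := by
  change P ((fun ω => (X 0 ω, X 1 ω, X 2 ω)) ⁻¹' {p | p.2.1 ∈ G p.1 ∧ p.2.2 ∈ G p.1}) ≤ _
  rw [← Measure.map_apply (by fun_prop) hG, hindep.map_fin_three_eq_prod hX hd,
    Measure.prod_apply hG]
  refine (lintegral_mono_ae ?_).trans (lintegral_indicator_const_le s (M ^ 2))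
  filter_upwards [hM] with x hx
  rw [show Prod.mk x ⁻¹' {p | p.2.1 ∈ G p.1 ∧ p.2.2 ∈ G p.1} = G x ×ˢ G x from rfl,
    Measure.prod_prod, ← sq]
  by_cases hxs : x ∈ s
  · rw [indicator_of_mem hxs] at hx ⊢
    gcongr
  · rw [indicator_of_notMem hxs] at hx ⊢
    simp [nonpos_iff_eq_zero.mp hx]

/-- Overlap estimate: `P(W₁₂ ≤ ε, W₁₃ ≤ ε) ≤ C' ε^{11/2}` for small `ε`. -/
theorem stmt16 (a : ℝ) (ha : 0 < a) (ha1 : a < 1)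
    {Ω : Type*} [MeasurableSpace Ω] (P : Measure Ω) [IsProbabilityMeasure P]
    (X : Fin 3 → Ω → EuclideanSpace ℝ (Fin 3))
    (hX : ∀ i, Measurable (X i))
    (hd : ∀ i, P.map (X i) = unifE a)
    (hindep : iIndepFun X P) :
    ∃ C' > (0:ℝ), ∃ ε₀ > (0:ℝ), ∀ ε : ℝ, 0 < ε → ε < ε₀ →
      P {ω | 2 - ‖X 0 ω - X 1 ω‖ ≤ ε ∧ 2 - ‖X 0 ω - X 2 ω‖ ≤ ε}
        ≤ ENNReal.ofReal (C' * ε ^ ((11:ℝ)/2)) := by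
  have ha2 : 0 < 1 - a ^ 2 := by nlinarith
  set κ := 2 / (1 - a ^ 2) with hκ
  have hκ0 : 0 < κ := by positivity
  set v := (volume (Ell a)).toReal
  have hv : 0 < v :=
    ENNReal.toReal_pos (volume_Ell_pos ha ha1.le).ne' (volume_Ell_ne_top ha ha1.le)
  refine ⟨16384 * κ ^ 4 * √κ / v ^ 3, by positivity, (1 - a ^ 2) / 64, by positivity,
    fun ε hε hε₀ => ?_⟩
  have hη : κ * ε ≤ 1 / 2 := by
    rw [hκ, div_mul_eq_mul_div, div_le_iff₀ ha2]
    linarith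
  calc P {ω | 2 - ‖X 0 ω - X 1 ω‖ ≤ ε ∧ 2 - ‖X 0 ω - X 2 ω‖ ≤ ε}
      ≤ ENNReal.ofReal (v⁻¹ * (32 * √ε * (κ * ε) * √(κ * ε))) ^ 2 *
          unifE a (equatorBand (κ * ε)) := by
        refine hindep.measure_mem_and_mem_le hX hd (G := fun x => {y | 2 - ‖x - y‖ ≤ ε})
          (by measurability) ?_
        filter_upwards [ae_mem_Ell a] with x hx
        exact unifE_setOf_two_sub_norm_sub_le_le ha ha1.le
          (fun y hy hny => mem_equatorBand_of_mem_Ell ha ha1 hy hny) hη (by nlinarith) hx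
    _ ≤ ENNReal.ofReal (v⁻¹ * (32 * √ε * (κ * ε) * √(κ * ε))) ^ 2 *
          ENNReal.ofReal (v⁻¹ * (16 * (κ * ε) * √(κ * ε))) := by
        gcongr
        exact unifE_apply_le_ofReal ha ha1.le
          ((measure_mono inter_subset_left).trans (volume_equatorBand_le hη))
    _ = ENNReal.ofReal (16384 * κ ^ 4 * √κ / v ^ 3 * ε ^ ((11:ℝ)/2)) := by
        rw [← ENNReal.ofReal_pow (by positivity), ← ENNReal.ofReal_mul (by positivity)]
        congr 1
        rw [Real.sqrt_mul hκ0.le, show ε ^ ((11 : ℝ) / 2) = √ε ^ 11 by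
          rw [Real.sqrt_eq_rpow, ← Real.rpow_natCast, ← Real.rpow_mul hε.le]; norm_num]
        set s := √ε
        set t := √κ
        rw [show ε = s ^ 2 from (Real.sq_sqrt hε.le).symm,
          show κ = t ^ 2 from (Real.sq_sqrt hκ0.le).symm]
        field_simp
        ring
end
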